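/- arXiv:1605.03449 — 2 statements merged into one kernel-verified Lean document; each statement's English description precedes it below -/
import Mathlib

section
/- Let f(X) be a polynomial with integer coefficients. Then f(X) is a one-stroke polynomial over a ring of modulo 2^w if and only if f(X) is a permutation polynomial over the ring and f(0) ≡ 1 (mod 2), f^2(0) ≡ 2 (mod 4), and f^4(0) ≡ 4 (mod 8). -/
open Polynomial

/-- `f` is a permutation polynomial over a ring of modulo `2^w`:
for every `w ≥ 0`, the induced map on `ℤ/2^wℤ` is a bijection. -/
def IsPermPoly (f : Polynomial ℤ) : Prop :=
  ∀ w : ℕ, Function.Bijective (fun x : ZMod (2 ^ w) => f.eval₂ (Int.castRingHom (ZMod (2 ^ w))) x)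

/-- `f` is a one-stroke polynomial over a ring of modulo `2^w`:
it is a permutation polynomial and, for every `w ≥ 1` and every point of `ℤ/2^wℤ`,
the orbit `{f^i(X̄) : 0 ≤ i < 2^w}` is all of `ℤ/2^wℤ`. -/
def IsOneStroke (f : Polynomial ℤ) : Prop :=
  IsPermPoly f ∧ ∀ w : ℕ, 1 ≤ w → ∀ x : ℤ, ∀ y : ZMod (2 ^ w),
    ∃ i < 2 ^ w, (((fun t => f.eval t)^[i] x : ℤ) : ZMod (2 ^ w)) = y

/-!
Write `a n = f^[2^n] 0`. Modulo `2^(n+1)` the permutation induced by `f` is one cycle iff `0` has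
minimal period `2^(n+1)`, i.e. iff `2^(n+1) ∤ a n` and `2^(n+1) ∣ a (n+1)`; for all `n` together
this says `a n ≡ 2^n [ZMOD 2^(n+1)]` for every `n`.

For `n ≥ 2` that congruence passes from `n` to `n + 1`. As `f` permutes `ℤ/4`, `f'` is odd; as
`f''` is even, `f' mod 4` depends only on the parity of its argument, and the orbit of `0`
alternates in parity. By the chain rule, `g = f^[2^n]` thus has
`g'(0) ≡ (f'(0) f'(1))^(2^(n-1)) ≡ 1 [ZMOD 4]`, and the first-order Taylor expansion of `g` at `0`
with step `g 0 ∈ 2^n + 2^(n+1)ℤ` gives `g (g 0) ≡ 2^(n+1) [ZMOD 2^(n+2)]`.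
-/

open Function

theorem Int.modEq_two_pow_iff {a : ℤ} {n : ℕ} :
    a ≡ 2 ^ n [ZMOD 2 ^ (n + 1)] ↔ 2 ^ n ∣ a ∧ ¬2 ^ (n + 1) ∣ a := by
  constructor
  · intro h
    obtain ⟨j, hj⟩ := Int.modEq_iff_dvd.1 h.symm
    refine ⟨⟨1 + 2 * j, by linear_combination hj⟩, fun ha => ?_⟩
    have : (2 : ℤ) ^ (n + 1) ∣ 2 ^ n := by simpa using dvd_sub ha ⟨j, hj⟩
    rw [_root_.pow_dvd_pow_iff two_ne_zero (by norm_num [Int.isUnit_iff])] at this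
    omega
  · rintro ⟨⟨k, rfl⟩, hk⟩
    obtain ⟨j, rfl⟩ : Odd k :=
      Int.not_even_iff_odd.1 fun ⟨j, hj⟩ => hk ⟨j, by rw [hj, pow_succ]; ring⟩
    exact Int.modEq_iff_dvd.2 ⟨-j, by ring⟩

theorem Int.forall_modEq_two_pow_iff (a : ℕ → ℤ) :
    (∀ n, a n ≡ 2 ^ n [ZMOD 2 ^ (n + 1)]) ↔
      ∀ n, ¬2 ^ (n + 1) ∣ a n ∧ 2 ^ (n + 1) ∣ a (n + 1) := by
  simp only [Int.modEq_two_pow_iff]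
  refine ⟨fun h n => ⟨(h n).2, (h (n + 1)).1⟩, fun h n => ⟨?_, (h n).1⟩⟩
  cases n with
  | zero => simp
  | succ n => exact (h n).2

namespace Function

theorem minimalPeriod_eq_prime_pow_iff {α : Type*} {g : α → α} {x : α} {p k : ℕ}
    [Fact p.Prime] :
    minimalPeriod g x = p ^ (k + 1) ↔
      ¬IsPeriodicPt g (p ^ k) x ∧ IsPeriodicPt g (p ^ (k + 1)) x := by
  refine ⟨fun h => ⟨?_, h ▸ isPeriodicPt_minimalPeriod g x⟩,
    fun h => minimalPeriod_eq_prime_pow h.1 h.2⟩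
  have hp := (Fact.out : p.Prime).one_lt
  exact not_isPeriodicPt_of_pos_of_lt_minimalPeriod (pow_pos (by omega) k).ne'
    (h ▸ pow_lt_pow_right₀ hp (by omega))

variable {α : Type*} [Fintype α] {g : α → α} {x : α}

theorem exists_iterate_eq_of_minimalPeriod_eq_card (h : minimalPeriod g x = Fintype.card α)
    (y : α) : ∃ i < Fintype.card α, g^[i] x = y := by
  have hinj : Injective fun i : Fin (Fintype.card α) => g^[i] x := fun i j hij =>
    Fin.ext <| iterate_injOn_Iio_minimalPeriod (by simp [h]) (by simp [h]) hij
  obtain ⟨i, rfl⟩ := ((Fintype.bijective_iff_injective_and_card _).2 ⟨hinj, by simp⟩).2 y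
  exact ⟨i, i.2, rfl⟩

theorem minimalPeriod_eq_card_of_forall_exists_iterate_eq (hg : Injective g)
    (h : ∀ y, ∃ i < Fintype.card α, g^[i] x = y) : minimalPeriod g x = Fintype.card α := by
  classical
  have hpos := minimalPeriod_pos_of_mem_periodicPts (hg.mem_periodicPts x)
  refine le_antisymm minimalPeriod_le_card ?_
  calc Fintype.card α = (Finset.univ : Finset α).card := rfl
    _ ≤ ((Finset.range (minimalPeriod g x)).image (g^[·] x)).card := by
      refine Finset.card_le_card fun y _ => ?_
      obtain ⟨i, -, rfl⟩ := h y
      exact Finset.mem_image.2 ⟨i % minimalPeriod g x, Finset.mem_range.2 (Nat.mod_lt _ hpos),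
        iterate_mod_minimalPeriod_eq⟩
    _ ≤ minimalPeriod g x := Finset.card_image_le.trans (Finset.card_range _).le

theorem minimalPeriod_eq_card_of_minimalPeriod_eq_card
    (hx : minimalPeriod g x = Fintype.card α) (y : α) : minimalPeriod g y = Fintype.card α := by
  have hx_mem : x ∈ periodicPts g :=
    minimalPeriod_pos_iff_mem_periodicPts.1 (hx ▸ Fintype.card_pos_iff.2 ⟨x⟩)
  obtain ⟨i, -, rfl⟩ := exists_iterate_eq_of_minimalPeriod_eq_card hx y
  rw [minimalPeriod_apply_iterate hx_mem, hx]

end Function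

namespace Polynomial

theorem eval_modEq (p : ℤ[X]) {n x y : ℤ} (h : x ≡ y [ZMOD n]) : p.eval x ≡ p.eval y [ZMOD n] :=
  Int.modEq_iff_dvd.2 ((Int.modEq_iff_dvd.1 h).trans (sub_dvd_eval_sub y x p))

theorem even_derivative_derivative_eval (p : ℤ[X]) (x : ℤ) :
    Even ((derivative (derivative p)).eval x) := by
  have h : 2 * hasseDeriv 2 p = derivative (derivative p) := by
    simpa using congrFun (factorial_smul_hasseDeriv (R := ℤ) 2) p
  refine ⟨(hasseDeriv 2 p).eval x, ?_⟩
  rw [← h]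
  simp [two_mul]

theorem derivative_eval_modEq_four (p : ℤ[X]) {x y : ℤ} (h : x ≡ y [ZMOD 2]) :
    p.derivative.eval x ≡ p.derivative.eval y [ZMOD 4] := by
  obtain ⟨m, hm⟩ := Int.modEq_iff_dvd.1 h
  obtain ⟨k, hk⟩ := p.derivative.binomExpansion x (2 * m)
  obtain ⟨c, hc⟩ := even_derivative_derivative_eval p x
  rw [show y = x + 2 * m by omega, hk, hc]
  exact Int.modEq_iff_dvd.2 ⟨c * m + k * m ^ 2, by ring⟩

theorem derivative_eval_eval_mul_derivative_eval_modEq {f : ℤ[X]}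
    (hf : ∀ y, f.eval y ≡ y + 1 [ZMOD 2]) (y : ℤ) :
    f.derivative.eval (f.eval y) * f.derivative.eval y ≡
      f.derivative.eval 1 * f.derivative.eval 0 [ZMOD 4] := by
  have hfy := hf y
  rcases Int.emod_two_eq_zero_or_one y with hy | hy
  · have hfy' : f.eval y ≡ 1 [ZMOD 2] := by unfold Int.ModEq at *; omega
    exact (f.derivative_eval_modEq_four hfy').mul (f.derivative_eval_modEq_four hy)
  · have hfy' : f.eval y ≡ 0 [ZMOD 2] := by unfold Int.ModEq at *; omega
    rw [mul_comm (f.derivative.eval 1)]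
    exact (f.derivative_eval_modEq_four hfy').mul (f.derivative_eval_modEq_four hy)

theorem derivative_comp_iterate_X_eval_succ {R : Type*} [CommSemiring R] (f : R[X]) (k : ℕ)
    (x : R) : (f.comp^[k + 1] X).derivative.eval x =
      f.derivative.eval ((fun t => f.eval t)^[k] x) * (f.comp^[k] X).derivative.eval x := by
  rw [iterate_succ_apply', derivative_comp, eval_mul, eval_comp, iterate_comp_eval, eval_X,
    mul_comm]

theorem derivative_comp_iterate_X_two_mul_eval_modEq {f : ℤ[X]} {n c : ℤ}
    (hc : ∀ y, f.derivative.eval (f.eval y) * f.derivative.eval y ≡ c [ZMOD n]) (m : ℕ)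
    (x : ℤ) : (f.comp^[2 * m] X).derivative.eval x ≡ c ^ m [ZMOD n] := by
  induction m with
  | zero => simp [Int.ModEq.refl]
  | succ m ih =>
    rw [show 2 * (m + 1) = 2 * m + 1 + 1 by ring, derivative_comp_iterate_X_eval_succ,
      derivative_comp_iterate_X_eval_succ, iterate_succ_apply', ← mul_assoc, pow_succ']
    exact (hc _).mul ih

theorem eval_eval_modEq_add_two_pow_succ {g : ℤ[X]} {n : ℕ} {x : ℤ} (hn : 2 ≤ n)
    (hg' : g.derivative.eval x ≡ 1 [ZMOD 4]) (hx : g.eval x ≡ x + 2 ^ n [ZMOD 2 ^ (n + 1)]) :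
    g.eval (g.eval x) ≡ x + 2 ^ (n + 1) [ZMOD 2 ^ (n + 2)] := by
  obtain ⟨m, rfl⟩ := Nat.exists_eq_add_of_le' hn
  obtain ⟨c, hc⟩ := Int.modEq_iff_dvd.1 hx
  obtain ⟨d, hd⟩ := Int.modEq_iff_dvd.1 hg'
  obtain ⟨k, hk⟩ := g.binomExpansion x (g.eval x - x)
  rw [add_sub_cancel] at hk
  have hG : g.eval x = x + 2 ^ (m + 2) - 2 ^ (m + 3) * c := by linear_combination -hc
  have hD : g.derivative.eval x = 1 - 4 * d := by linear_combination -hd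
  rw [hk, hG, hD]
  exact Int.modEq_iff_dvd.2 ⟨c + d * (1 - 2 * c) - k * 2 ^ m * (1 - 2 * c) ^ 2, by ring⟩

def modMap (f : ℤ[X]) (N : ℕ) : ZMod N → ZMod N :=
  fun x => f.eval₂ (Int.castRingHom (ZMod N)) x

theorem modMap_intCast (f : ℤ[X]) (N : ℕ) (x : ℤ) :
    f.modMap N x = ((f.eval x : ℤ) : ZMod N) := by
  simp [modMap, eval₂_at_intCast]

theorem iterate_modMap_intCast (f : ℤ[X]) (N k : ℕ) (x : ℤ) :
    (f.modMap N)^[k] x = (((fun t => f.eval t)^[k] x : ℤ) : ZMod N) :=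
  ((Semiconj.iterate_right (fun y => (modMap_intCast f N y).symm) k) x).symm

theorem isPeriodicPt_modMap_zero_iff (f : ℤ[X]) (N k : ℕ) :
    IsPeriodicPt (f.modMap N) k 0 ↔ (N : ℤ) ∣ (fun t => f.eval t)^[k] 0 := by
  rw [IsPeriodicPt, IsFixedPt, ← Int.cast_zero, iterate_modMap_intCast, Int.cast_zero,
    ZMod.intCast_zmod_eq_zero_iff_dvd]

theorem minimalPeriod_modMap_eq_two_pow_iff (f : ℤ[X]) (n : ℕ) :
    minimalPeriod (f.modMap (2 ^ (n + 1))) 0 = 2 ^ (n + 1) ↔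
      ¬2 ^ (n + 1) ∣ (fun t => f.eval t)^[2 ^ n] 0 ∧
        2 ^ (n + 1) ∣ (fun t => f.eval t)^[2 ^ (n + 1)] 0 := by
  have := Fact.mk Nat.prime_two
  simp only [minimalPeriod_eq_prime_pow_iff, isPeriodicPt_modMap_zero_iff, Nat.cast_pow,
    Nat.cast_ofNat]

end Polynomial

namespace IsPermPoly

variable {f : ℤ[X]}

theorem modEq_of_eval_modEq (hf : IsPermPoly f) (w : ℕ) {a b : ℤ}
    (h : f.eval a ≡ f.eval b [ZMOD 2 ^ w]) : a ≡ b [ZMOD 2 ^ w] := by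
  have hinj : Injective (f.modMap (2 ^ w)) := (hf w).injective
  have hcast := @hinj a b
  simp only [modMap_intCast, ZMod.intCast_eq_intCast_iff, Nat.cast_pow, Nat.cast_ofNat] at hcast
  exact hcast h

theorem odd_derivative_eval (hf : IsPermPoly f) (x : ℤ) : Odd (f.derivative.eval x) := by
  by_contra hodd
  obtain ⟨u, hu⟩ := Int.not_odd_iff_even.1 hodd
  obtain ⟨k, hk⟩ := f.binomExpansion x 2
  have h : f.eval (x + 2) ≡ f.eval x [ZMOD 2 ^ 2] :=
    Int.modEq_iff_dvd.2 ⟨-(u + k), by rw [hk, hu]; ring⟩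
  have := hf.modEq_of_eval_modEq 2 h
  unfold Int.ModEq at this
  omega

theorem eval_modEq_add_one (hf : IsPermPoly f) (h0 : f.eval 0 ≡ 1 [ZMOD 2]) (y : ℤ) :
    f.eval y ≡ y + 1 [ZMOD 2] := by
  have h1 : ¬f.eval 1 ≡ f.eval 0 [ZMOD 2 ^ 1] := fun h => by
    have := hf.modEq_of_eval_modEq 1 h
    unfold Int.ModEq at this
    omega
  rcases Int.emod_two_eq_zero_or_one y with hy | hy
  · have := f.eval_modEq (show y ≡ 0 [ZMOD 2] from hy)
    unfold Int.ModEq at *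
    omega
  · have := f.eval_modEq (show y ≡ 1 [ZMOD 2] from hy)
    unfold Int.ModEq at *
    omega

theorem iterate_two_pow_succ_modEq (hf : IsPermPoly f) (h0 : f.eval 0 ≡ 1 [ZMOD 2]) {n : ℕ}
    (hn : 2 ≤ n) (h : (fun t => f.eval t)^[2 ^ n] 0 ≡ 2 ^ n [ZMOD 2 ^ (n + 1)]) :
    (fun t => f.eval t)^[2 ^ (n + 1)] 0 ≡ 2 ^ (n + 1) [ZMOD 2 ^ (n + 2)] := by
  obtain ⟨m, rfl⟩ := Nat.exists_eq_add_of_le' hn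
  have hc : (f.derivative.eval 1 * f.derivative.eval 0) ^ 2 ≡ 1 [ZMOD 4] :=
    Int.sq_mod_four_eq_one_of_odd ((hf.odd_derivative_eval 1).mul (hf.odd_derivative_eval 0))
  have hg' : (f.comp^[2 ^ (m + 2)] X).derivative.eval 0 ≡ 1 [ZMOD 4] := by
    rw [pow_succ' 2 (m + 1)]
    refine (derivative_comp_iterate_X_two_mul_eval_modEq
      (derivative_eval_eval_mul_derivative_eval_modEq (hf.eval_modEq_add_one h0)) _ 0).trans ?_
    rw [pow_succ', pow_mul]
    simpa using hc.pow (2 ^ m)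
  have := eval_eval_modEq_add_two_pow_succ hn hg' (by simpa using h)
  rw [show 2 ^ (m + 2 + 1) = 2 ^ (m + 2) + 2 ^ (m + 2) by ring, iterate_add_apply]
  simpa using this

theorem iterate_two_pow_modEq (hf : IsPermPoly f) (h0 : f.eval 0 ≡ 1 [ZMOD 2])
    (h2 : (fun t => f.eval t)^[4] 0 ≡ 4 [ZMOD 8]) {n : ℕ} (hn : 2 ≤ n) :
    (fun t => f.eval t)^[2 ^ n] 0 ≡ 2 ^ n [ZMOD 2 ^ (n + 1)] := by
  induction n, hn using Nat.le_induction with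
  | base => simpa using h2
  | succ n hn ih => exact hf.iterate_two_pow_succ_modEq h0 hn ih

end IsPermPoly

theorem isOneStroke_iff (f : ℤ[X]) :
    IsOneStroke f ↔
      IsPermPoly f ∧ ∀ n, (fun t => f.eval t)^[2 ^ n] 0 ≡ 2 ^ n [ZMOD 2 ^ (n + 1)] := by
  simp only [Int.forall_modEq_two_pow_iff, ← minimalPeriod_modMap_eq_two_pow_iff]
  refine and_congr_right fun hf => ⟨fun h n => ?_, fun h w hw x y => ?_⟩
  · have hinj : Injective (f.modMap (2 ^ (n + 1))) := (hf (n + 1)).injective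
    have := minimalPeriod_eq_card_of_forall_exists_iterate_eq hinj (x := 0) fun y => by
      obtain ⟨i, hi, hy⟩ := h (n + 1) (by omega) 0 y
      exact ⟨i, by rwa [ZMod.card], by rwa [← Int.cast_zero, iterate_modMap_intCast]⟩
    rwa [ZMod.card] at this
  · obtain ⟨n, rfl⟩ : ∃ n, w = n + 1 := ⟨w - 1, by omega⟩
    have h0 : minimalPeriod (f.modMap (2 ^ (n + 1))) 0 = Fintype.card (ZMod (2 ^ (n + 1))) := by
      rw [ZMod.card, h n]
    obtain ⟨i, hi, hy⟩ := exists_iterate_eq_of_minimalPeriod_eq_card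
      (minimalPeriod_eq_card_of_minimalPeriod_eq_card h0 x) y
    rw [ZMod.card] at hi
    rw [iterate_modMap_intCast] at hy
    exact ⟨i, hi, hy⟩

theorem stmt_8 (f : Polynomial ℤ) :
    IsOneStroke f ↔
      (IsPermPoly f ∧
       f.eval 0 ≡ 1 [ZMOD 2] ∧
       (fun t => f.eval t)^[2] 0 ≡ 2 [ZMOD 4] ∧
       (fun t => f.eval t)^[4] 0 ≡ 4 [ZMOD 8]) := by
  rw [isOneStroke_iff]
  refine and_congr_right fun hf => ⟨fun h => ⟨by simpa using h 0, by simpa using h 1,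
    by simpa using h 2⟩, fun ⟨h0, h1, h2⟩ n => ?_⟩
  rcases (show n = 0 ∨ n = 1 ∨ 2 ≤ n by omega) with rfl | rfl | hn
  · simpa using h0
  · simpa using h1
  · exact hf.iterate_two_pow_modEq h0 h2 hn
end

section
/- Let f(X) be a one-stroke polynomial over a ring of modulo 2^w and let i ≥ 0 be an integer. If X̄ is an integer with X̄ ≡ 0 (mod 2^{i+1}), then f^{2^i}(X̄) ≡ 2^i (mod 2^{i+1}); and if X̄ ≡ 2^i (mod 2^{i+1}), then f^{2^i}(X̄) ≡ 0 (mod 2^{i+1}). -/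
open Polynomial

/-- casting commutes with iteration -/
lemma cast_iter (f : Polynomial ℤ) (w n : ℕ) (x : ℤ) :
    (((fun t => f.eval t)^[n] x : ℤ) : ZMod (2 ^ w)) =
      (fun y : ZMod (2 ^ w) => f.eval₂ (Int.castRingHom (ZMod (2 ^ w))) y)^[n]
        ((x : ℤ) : ZMod (2 ^ w)) := by
  induction n with
  | zero => rfl
  | succ n ih =>
    rw [Function.iterate_succ_apply', Function.iterate_succ_apply', ← ih]
    show (((f.eval ((fun t => f.eval t)^[n] x)) : ℤ) : ZMod (2 ^ w)) = _
    show ((Int.castRingHom (ZMod (2 ^ w))) (f.eval ((fun t => f.eval t)^[n] x))) = _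
    exact (Polynomial.eval₂_at_apply (Int.castRingHom (ZMod (2 ^ w))) _).symm

lemma orbit_inj (f : Polynomial ℤ) (hf : IsOneStroke f) (w : ℕ) (hw : 1 ≤ w) (x : ℤ) :
    Function.Injective (fun j : Fin (2 ^ w) =>
      (fun y : ZMod (2 ^ w) => f.eval₂ (Int.castRingHom (ZMod (2 ^ w))) y)^[j]
        ((x : ℤ) : ZMod (2 ^ w))) := by
  have hsurj : Function.Surjective (fun j : Fin (2 ^ w) =>
      (fun y : ZMod (2 ^ w) => f.eval₂ (Int.castRingHom (ZMod (2 ^ w))) y)^[j]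
        ((x : ℤ) : ZMod (2 ^ w))) := by
    intro y
    obtain ⟨j, hj, hjy⟩ := hf.2 w hw x y
    exact ⟨⟨j, hj⟩, (cast_iter f w j x).symm.trans hjy⟩
  haveI : NeZero (2 ^ w) := ⟨pow_ne_zero w two_ne_zero⟩
  have hcard : Fintype.card (Fin (2 ^ w)) = Fintype.card (ZMod (2 ^ w)) := by
    simp [ZMod.card]
  exact ((Fintype.bijective_iff_surjective_and_card _).2 ⟨hsurj, hcard⟩).1

theorem stmt_15 (f : Polynomial ℤ) (hf : IsOneStroke f) (i : ℕ) (x : ℤ) :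
    (x ≡ 0 [ZMOD 2 ^ (i + 1)] →
      (fun t => f.eval t)^[2 ^ i] x ≡ 2 ^ i [ZMOD 2 ^ (i + 1)]) ∧
    (x ≡ 2 ^ i [ZMOD 2 ^ (i + 1)] →
      (fun t => f.eval t)^[2 ^ i] x ≡ 0 [ZMOD 2 ^ (i + 1)]) := by
  set N := 2 ^ i with hN
  set y := (fun t => f.eval t)^[N] x with hy
  -- Step 1: y ≡ x [ZMOD 2^i]
  have h1 : y ≡ x [ZMOD (2 : ℤ) ^ i] := by
    rcases Nat.eq_zero_or_pos i with hi | hi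
    · subst hi; simpa using Int.modEq_one
    · have hper : ∀ z : ℤ,
          (fun u : ZMod (2 ^ i) => f.eval₂ (Int.castRingHom (ZMod (2 ^ i))) u)^[2 ^ i]
            ((z : ℤ) : ZMod (2 ^ i)) = ((z : ℤ) : ZMod (2 ^ i)) := by
        intro z
        set g := fun u : ZMod (2 ^ i) => f.eval₂ (Int.castRingHom (ZMod (2 ^ i))) u
        have hinj := orbit_inj f hf i hi z
        obtain ⟨j, hj⟩ := ((Fintype.bijective_iff_injective_and_card
            (fun j : Fin (2 ^ i) => g^[j] ((z : ℤ) : ZMod (2 ^ i)))).2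
            ⟨hinj, by haveI : NeZero (2 ^ i) := ⟨pow_ne_zero i two_ne_zero⟩; simp [ZMod.card]⟩).2
            (g^[2 ^ i] ((z : ℤ) : ZMod (2 ^ i)))
        rcases Nat.eq_zero_or_pos j.1 with h0 | h0
        · rw [← hj]; simp [h0]
        · exfalso
          have hle : (j : ℕ) ≤ 2 ^ i := le_of_lt j.2
          have hcomp : g^[(j : ℕ)] (g^[2 ^ i - (j : ℕ)] ((z : ℤ) : ZMod (2 ^ i)))
              = g^[(j : ℕ)] ((z : ℤ) : ZMod (2 ^ i)) := by
            rw [← Function.iterate_add_apply]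
            rw [show (j : ℕ) + (2 ^ i - (j : ℕ)) = 2 ^ i by omega]
            exact hj.symm
          have hginj : Function.Injective g := (hf.1 i).1
          have := hginj.iterate (j : ℕ) hcomp
          have hlt : 2 ^ i - (j : ℕ) < 2 ^ i := by omega
          have := hinj (a₁ := ⟨2 ^ i - (j : ℕ), hlt⟩) (a₂ := ⟨0, Nat.two_pow_pos i⟩)
            (by simpa using this)
          have : 2 ^ i - (j : ℕ) = 0 := congrArg Fin.val this
          omega
      have := hper x
      rw [← cast_iter] at this
      have := (ZMod.intCast_eq_intCast_iff _ _ _).1 this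
      simpa [hy, hN] using this
  -- Step 2: y ≡ x + 2^i [ZMOD 2^(i+1)]
  have h2 : y ≡ x + 2 ^ i [ZMOD (2 : ℤ) ^ (i + 1)] := by
    have hd : (2 : ℤ) ^ i ∣ x - y := (Int.modEq_iff_dvd.1 h1)
    obtain ⟨k, hk⟩ := hd
    rcases Int.even_or_odd k with ⟨t, ht⟩ | ⟨t, ht⟩
    · exfalso
      -- then y ≡ x [ZMOD 2^(i+1)], contradicting orbit injectivity at w = i+1
      have hyx : ((y : ℤ) : ZMod (2 ^ (i + 1))) = ((x : ℤ) : ZMod (2 ^ (i + 1))) := by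
        rw [ZMod.intCast_eq_intCast_iff]
        refine Int.modEq_iff_dvd.2 ⟨t, ?_⟩
        push_cast
        rw [pow_succ]
        have hxy : x - y = 2 ^ i * (t + t) := by rw [hk, ht]
        linarith
      have hinj := orbit_inj f hf (i + 1) (by omega) x
      have hcast := cast_iter f (i + 1) N x
      rw [← hy, hyx] at hcast
      have hNlt : N < 2 ^ (i + 1) := by
        have hp : 0 < 2 ^ i := Nat.two_pow_pos i
        rw [hN, pow_succ]; omega
      have hfin := hinj (a₁ := ⟨N, hNlt⟩) (a₂ := ⟨0, Nat.two_pow_pos (i+1)⟩)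
        (by simpa using hcast.symm)
      have : N = 0 := congrArg Fin.val hfin
      simp [hN] at this
    · refine Int.modEq_iff_dvd.2 ⟨t + 1, ?_⟩
      have hxy : x - y = 2 ^ i * (2 * t + 1) := by rw [hk, ht]
      rw [pow_succ]
      linarith
  constructor
  · intro h0
    calc y ≡ x + 2 ^ i [ZMOD (2:ℤ) ^ (i + 1)] := h2
      _ ≡ 0 + 2 ^ i [ZMOD (2:ℤ) ^ (i + 1)] := h0.add_right _
      _ = 2 ^ i := by ring
  · intro h0
    calc y ≡ x + 2 ^ i [ZMOD (2:ℤ) ^ (i + 1)] := h2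
      _ ≡ 2 ^ i + 2 ^ i [ZMOD (2:ℤ) ^ (i + 1)] := h0.add_right _
      _ = 2 ^ (i + 1) := by ring
      _ ≡ 0 [ZMOD (2:ℤ) ^ (i + 1)] := (Int.modEq_iff_dvd.2 (by simp)).symm
end
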